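/- The number of orbits on P^1(F) of the group G_e(k) = {[[1+ϖ^k a, ϖ^k b],[ϖ^{k-1} c, 1+ϖ^k d]] : a,b,c,d ∈ O} acting by right Möbius transformations equals 2q^{k−1}: the orbits on {|z| ≤ 1} are the q^{k−1} discs of radius |ϖ|^{k−1}, and the orbits on {|1/w| ≤ |ϖ|} are the q^{k−1} discs of radius |ϖ|^k in the coordinate 1/w. -/

import Mathlib

open Matrix Pointwise
open scoped OnePoint

noncomputable section

/-- `ϖ` is a uniformizer of the nonarchimedean field `F`. -/
def IsUniformizer (F : Type*) [NormedField F] (ϖ : F) : Prop :=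
  ϖ ≠ 0 ∧ ‖ϖ‖ < 1 ∧ ∀ x : F, ‖x‖ < 1 → ‖x‖ ≤ ‖ϖ‖

/-- The principal congruence subgroup `G_{v₀}(k)` of level `k`: matrices in `GL₂(𝒪)`
congruent to the identity modulo `ϖ^k` (entrywise, each entry of `g - 1` lies in `ϖ^k 𝒪`,
i.e. has norm at most `‖ϖ‖^k`). -/
def Gv0 (F : Type*) [NormedField F] (ϖ : F) (k : ℕ) : Set (GL (Fin 2) F) :=
  {g | ‖(g : Matrix (Fin 2) (Fin 2) F) 0 0 - 1‖ ≤ ‖ϖ‖ ^ k ∧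
       ‖(g : Matrix (Fin 2) (Fin 2) F) 0 1‖ ≤ ‖ϖ‖ ^ k ∧
       ‖(g : Matrix (Fin 2) (Fin 2) F) 1 0‖ ≤ ‖ϖ‖ ^ k ∧
       ‖(g : Matrix (Fin 2) (Fin 2) F) 1 1 - 1‖ ≤ ‖ϖ‖ ^ k}

/-- The diagonal matrix `diag(ϖ, 1)` as an element of `GL₂(F)`. -/
def dmat (F : Type*) [Field F] (ϖ : F) (h : ϖ ≠ 0) : GL (Fin 2) F :=
  Matrix.GeneralLinearGroup.mkOfDetNeZero !![ϖ, 0; 0, 1]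
    (by simpa [Matrix.det_fin_two_of] using h)

/-- `G_{v₁}(k) = diag(ϖ,1) · G_{v₀}(k) · diag(ϖ,1)⁻¹`. -/
def Gv1 (F : Type*) [NormedField F] (ϖ : F) (h : ϖ ≠ 0) (k : ℕ) : Set (GL (Fin 2) F) :=
  (fun g => dmat F ϖ h * g * (dmat F ϖ h)⁻¹) '' Gv0 F ϖ k

/-- The explicit set `H` of matrices `[[1+ϖ^k a, ϖ^k b],[ϖ^{k-1} c, 1+ϖ^k d]]`, `a,b,c,d ∈ 𝒪`;
this is the edge group `G_e(k)`. -/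
def Ge (F : Type*) [NormedField F] (ϖ : F) (k : ℕ) : Set (GL (Fin 2) F) :=
  {g | ‖(g : Matrix (Fin 2) (Fin 2) F) 0 0 - 1‖ ≤ ‖ϖ‖ ^ k ∧
       ‖(g : Matrix (Fin 2) (Fin 2) F) 0 1‖ ≤ ‖ϖ‖ ^ k ∧
       ‖(g : Matrix (Fin 2) (Fin 2) F) 1 0‖ ≤ ‖ϖ‖ ^ (k - 1) ∧
       ‖(g : Matrix (Fin 2) (Fin 2) F) 1 1 - 1‖ ≤ ‖ϖ‖ ^ k}

/-- The explicit description of `G_{v₁}(k)`: matrices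
`[[1+ϖ^k a, ϖ^{k+1} b],[ϖ^{k-1} c, 1+ϖ^k d]]` with `a,b,c,d ∈ 𝒪`. -/
def Gv1ex (F : Type*) [NormedField F] (ϖ : F) (k : ℕ) : Set (GL (Fin 2) F) :=
  {g | ‖(g : Matrix (Fin 2) (Fin 2) F) 0 0 - 1‖ ≤ ‖ϖ‖ ^ k ∧
       ‖(g : Matrix (Fin 2) (Fin 2) F) 0 1‖ ≤ ‖ϖ‖ ^ (k + 1) ∧
       ‖(g : Matrix (Fin 2) (Fin 2) F) 1 0‖ ≤ ‖ϖ‖ ^ (k - 1) ∧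
       ‖(g : Matrix (Fin 2) (Fin 2) F) 1 1 - 1‖ ≤ ‖ϖ‖ ^ k}

open scoped Classical in
/-- The right Möbius action of `g = [[a,b],[c,d]]` on `ℙ¹(F) = F ∪ {∞}` (here modelled as
`Option F`, with `none = ∞`): `z·g = (az+c)/(bz+d)`, `∞·g = a/b`, with value `∞` when the
denominator vanishes. -/
def moeb (F : Type*) [Field F] (g : Matrix (Fin 2) (Fin 2) F) : Option F → Option F
  | Option.some z => if g 0 1 * z + g 1 1 = 0 then Option.none
      else Option.some ((g 0 0 * z + g 1 0) / (g 0 1 * z + g 1 1))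
  | Option.none => if g 0 1 = 0 then Option.none else Option.some (g 0 0 / g 0 1)

/-- The orbit of `z ∈ ℙ¹(F)` under a set `S` of elements of `GL₂(F)` acting on the right by
Möbius transformations. -/
def orb (F : Type*) [Field F] (S : Set (GL (Fin 2) F)) (z : Option F) : Set (Option F) :=
  {w | ∃ g ∈ S, moeb F (g : Matrix (Fin 2) (Fin 2) F) z = w}

/-- `D` is an orbit of `S` on `ℙ¹(F)`. -/
def IsOrbit (F : Type*) [Field F] (S : Set (GL (Fin 2) F)) (D : Set (Option F)) : Prop :=
  ∃ z, D = orb F S z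

/-- The region `B_w(∞, |ϖ|) = {w ∈ ℙ¹(F) : |1/w| ≤ |ϖ|} = {|w| ≥ |ϖ|⁻¹} ∪ {∞}`. -/
def regionInfty (F : Type*) [NormedField F] (ϖ : F) : Set (Option F) :=
  {w | w = Option.none ∨ ∃ z : F, w = Option.some z ∧ ‖ϖ‖⁻¹ ≤ ‖z‖}

/-- The coordinate `1/w` on `ℙ¹(F)`, with `1/∞ = 0`. -/
def invc (F : Type*) [Field F] : Option F → F
  | Option.none => 0
  | Option.some z => z⁻¹

/-- The residue field of `F` has cardinality `q`: there are exactly `q` classes in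
`𝒪/(ϖ)`, witnessed by a set of representatives. -/
def ResidueCard (F : Type*) [NormedField F] (ϖ : F) (q : ℕ) : Prop :=
  ∃ s : Finset F, s.card = q ∧ (∀ x ∈ s, ‖x‖ ≤ 1) ∧
    ∀ x : F, ‖x‖ ≤ 1 → ∃! y, y ∈ s ∧ ‖x - y‖ ≤ ‖ϖ‖

/-- The conjugate `h S h⁻¹` of a set of matrices. -/
def conjSet (F : Type*) [Field F] (h : GL (Fin 2) F) (S : Set (GL (Fin 2) F)) :
    Set (GL (Fin 2) F) :=
  (fun g => h * g * h⁻¹) '' S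

/-- The matrix `g_α = [[1,0],[α,ϖ]]` as an element of `GL₂(F)`. -/
def galpha (F : Type*) [Field F] (ϖ α : F) (h : ϖ ≠ 0) : GL (Fin 2) F :=
  Matrix.GeneralLinearGroup.mkOfDetNeZero !![1, 0; α, ϖ]
    (by simpa [Matrix.det_fin_two_of] using h)

/-- The diagonal matrix `diag(1, ϖ^n)` as an element of `GL₂(F)`. -/
def dmatN (F : Type*) [Field F] (ϖ : F) (h : ϖ ≠ 0) (n : ℕ) : GL (Fin 2) F :=
  Matrix.GeneralLinearGroup.mkOfDetNeZero !![1, 0; 0, ϖ ^ n]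
    (by simpa [Matrix.det_fin_two_of] using pow_ne_zero n h)

/-!
Every `g = [[a, b], [c, d]] ∈ G_e(k)` is close to the identity. On `{|z| ≤ 1}` the denominator
`b z + d` is a unit and `z·g - z = ((a - 1) z + c - b z² - (d - 1) z) / (b z + d)` has norm at most
`|ϖ|^(k-1)`; in the coordinate `u = 1/w` near `∞`, `g` acts by `u ↦ (d u + b) / (c u + a)`, which
moves `u` by at most `|ϖ|^k`. The unipotent elements `[[1, 0], [c, 1]]` and `[[1, b], [0, 1]]` of
`G_e(k)` realise every such displacement, so the orbits are exactly these discs. Their centres are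
counted by `ϖ`-adic digit strings of length `k - 1` with digits in a set of residue representatives.
-/

namespace IsUltrametricDist

variable {S : Type*} [SeminormedAddGroup S] [IsUltrametricDist S] {x y : S} {r : ℝ}

lemma norm_add_le_of_le_of_le (hx : ‖x‖ ≤ r) (hy : ‖y‖ ≤ r) : ‖x + y‖ ≤ r :=
  (norm_add_le_max x y).trans (max_le hx hy)

lemma norm_sub_le_of_le_of_le (hx : ‖x‖ ≤ r) (hy : ‖y‖ ≤ r) : ‖x - y‖ ≤ r := by
  rw [sub_eq_add_neg]
  exact norm_add_le_of_le_of_le hx (by rwa [norm_neg])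

lemma norm_sub_le_iff_of_norm_sub_le {S : Type*} [SeminormedAddCommGroup S] [IsUltrametricDist S]
    {a b x : S} {r : ℝ} (h : ‖a - b‖ ≤ r) : ‖x - a‖ ≤ r ↔ ‖x - b‖ ≤ r := by
  constructor <;> intro hx
  · rw [← sub_add_sub_cancel x a b]
    exact norm_add_le_of_le_of_le hx h
  · rw [← sub_sub_sub_cancel_right x a b]
    exact norm_sub_le_of_le_of_le hx h

end IsUltrametricDist

open IsUltrametricDist

lemma norm_eq_one_of_norm_sub_one_lt {R : Type*} [SeminormedRing R] [NormOneClass R]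
    [IsUltrametricDist R] {x : R} (h : ‖x - 1‖ < 1) : ‖x‖ = 1 := by
  have := norm_add_eq_max_of_norm_ne_norm (x := x - 1) (y := 1) (by rw [norm_one]; exact h.ne)
  rwa [sub_add_cancel, norm_one, max_eq_right h.le] at this

lemma norm_mul_le_of_le_of_norm_le_one {R : Type*} [SeminormedRing R] {x y : R} {r : ℝ}
    (hx : ‖x‖ ≤ r) (hy : ‖y‖ ≤ 1) : ‖x * y‖ ≤ r :=
  (norm_mul_le x y).trans ((mul_le_of_le_one_right (norm_nonneg x) hy).trans hx)

lemma norm_div_sub_le_of_norm_denom_eq_one {F : Type*} [NormedField F] [IsUltrametricDist F]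
    {α β γ δ x : F} {r : ℝ} (hden : ‖β * x + δ‖ = 1) (hα : ‖(α - 1) * x‖ ≤ r)
    (hβ : ‖β * x * x‖ ≤ r) (hγ : ‖γ‖ ≤ r) (hδ : ‖(δ - 1) * x‖ ≤ r) :
    ‖(α * x + γ) / (β * x + δ) - x‖ ≤ r := by
  have hne : β * x + δ ≠ 0 := norm_ne_zero_iff.1 (by rw [hden]; exact one_ne_zero)
  have key : (α * x + γ) / (β * x + δ) - x
      = ((α - 1) * x + γ - β * x * x - (δ - 1) * x) / (β * x + δ) := by
    rw [eq_div_iff hne, sub_mul, div_mul_cancel₀ _ hne]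
    ring
  rw [key, norm_div, hden, div_one]
  exact norm_sub_le_of_le_of_le (norm_sub_le_of_le_of_le (norm_add_le_of_le_of_le hα hγ) hβ) hδ

section Moebius

variable {F : Type*} [Field F]

lemma moeb_some_of_ne_zero (A : Matrix (Fin 2) (Fin 2) F) {z : F} (h : A 0 1 * z + A 1 1 ≠ 0) :
    moeb F A (some z) = some ((A 0 0 * z + A 1 0) / (A 0 1 * z + A 1 1)) := by
  simp [moeb, h]

lemma moeb_one (w : Option F) : moeb F 1 w = w := by
  cases w <;> simp [moeb]

lemma mul_add_ne_zero_of_mul_inv_add_ne_zero {a c z : F} (hz : z ≠ 0) (h : c * z⁻¹ + a ≠ 0) :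
    a * z + c ≠ 0 := by
  rw [show a * z + c = z * (c * z⁻¹ + a) by field_simp; ring]
  exact mul_ne_zero hz h

lemma invc_moeb (A : Matrix (Fin 2) (Fin 2) F) {w : Option F} (hw : w ≠ some 0)
    (h : A 1 0 * invc F w + A 0 0 ≠ 0) :
    invc F (moeb F A w) = (A 1 1 * invc F w + A 0 1) / (A 1 0 * invc F w + A 0 0) := by
  rcases w with _ | z
  · by_cases hb : A 0 1 = 0 <;> simp_all [moeb, invc]
  · have hz : z ≠ 0 := fun h0 => hw (by rw [h0])
    simp only [invc.eq_2] at h ⊢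
    have hN : A 0 0 * z + A 1 0 ≠ 0 := mul_add_ne_zero_of_mul_inv_add_ne_zero hz h
    by_cases hD : A 0 1 * z + A 1 1 = 0
    · rw [show moeb F A (some z) = none by simp [moeb, hD], invc.eq_1, eq_comm, div_eq_zero_iff]
      left
      field_simp
      linear_combination hD
    · rw [moeb_some_of_ne_zero A hD, invc.eq_2, inv_div, div_eq_div_iff hN h]
      field_simp
      ring

lemma moeb_ne_some_zero (A : Matrix (Fin 2) (Fin 2) F) {w : Option F} (hw : w ≠ some 0)
    (h : A 1 0 * invc F w + A 0 0 ≠ 0) : moeb F A w ≠ some 0 := by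
  rcases w with _ | z
  · by_cases hb : A 0 1 = 0 <;> simp_all [moeb, invc]
  · have hz : z ≠ 0 := fun h0 => hw (by rw [h0])
    simp only [invc.eq_2] at h
    have hN : A 0 0 * z + A 1 0 ≠ 0 := mul_add_ne_zero_of_mul_inv_add_ne_zero hz h
    by_cases hD : A 0 1 * z + A 1 1 = 0
    · simp [moeb, hD]
    · simp [moeb_some_of_ne_zero A hD, hN, hD]

lemma mem_orb_self {S : Set (GL (Fin 2) F)} (hS : 1 ∈ S) (w : Option F) : w ∈ orb F S w :=
  ⟨1, hS, moeb_one w⟩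

end Moebius

section Region

variable {F : Type*} [NormedField F] {ϖ : F}

lemma some_mem_regionInfty_iff {z : F} : some z ∈ regionInfty F ϖ ↔ ‖ϖ‖⁻¹ ≤ ‖z‖ := by
  simp [regionInfty]

lemma mem_regionInfty_iff (hϖ : ϖ ≠ 0) {w : Option F} :
    w ∈ regionInfty F ϖ ↔ w ≠ some 0 ∧ ‖invc F w‖ ≤ ‖ϖ‖ := by
  rcases w with _ | z
  · simp [regionInfty, invc]
  · have hϖ' : 0 < ‖ϖ‖ := norm_pos_iff.2 hϖ
    rw [some_mem_regionInfty_iff, invc.eq_2, norm_inv, ne_eq, Option.some.injEq]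
    constructor
    · intro h
      have hz : 0 < ‖z‖ := (inv_pos.2 hϖ').trans_le h
      exact ⟨norm_pos_iff.1 hz, inv_le_of_inv_le₀ hϖ' h⟩
    · rintro ⟨hz, h⟩
      exact inv_le_of_inv_le₀ (norm_pos_iff.2 hz) h

lemma invc_injOn_regionInfty (hϖ : ϖ ≠ 0) : Set.InjOn (invc F) (regionInfty F ϖ) := by
  intro w hw w' hw' h
  rw [mem_regionInfty_iff hϖ] at hw hw'
  rcases w with _ | z <;> rcases w' with _ | z' <;> simp_all [invc, eq_comm]

lemma one_lt_norm_of_some_mem_regionInfty (hϖ : ϖ ≠ 0) (hϖ1 : ‖ϖ‖ < 1) {z : F}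
    (h : some z ∈ regionInfty F ϖ) : 1 < ‖z‖ :=
  ((one_lt_inv₀ (norm_pos_iff.2 hϖ)).2 hϖ1).trans_le (some_mem_regionInfty_iff.1 h)

open scoped Classical in
def ofInvc (u : F) : Option F :=
  if u = 0 then none else some u⁻¹

lemma invc_ofInvc (u : F) : invc F (ofInvc u) = u := by
  by_cases h : u = 0 <;> simp [ofInvc, invc, h]

lemma ofInvc_mem_regionInfty (hϖ : ϖ ≠ 0) {u : F} (hu : ‖u‖ ≤ ‖ϖ‖) :
    ofInvc u ∈ regionInfty F ϖ := by
  refine (mem_regionInfty_iff hϖ).2 ⟨?_, by rwa [invc_ofInvc]⟩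
  by_cases h : u = 0 <;> simp [ofInvc, h]

lemma ofInvc_mul_mem_regionInfty (hϖ : ϖ ≠ 0) {x : F} (hx : ‖x‖ ≤ 1) :
    ofInvc (ϖ * x) ∈ regionInfty F ϖ := by
  refine ofInvc_mem_regionInfty hϖ ?_
  rw [norm_mul]
  exact mul_le_of_le_one_right (norm_nonneg ϖ) hx

lemma IsUniformizer.some_mem_regionInfty_of_one_lt_norm (hϖ : IsUniformizer F ϖ) {z : F}
    (hz : 1 < ‖z‖) : some z ∈ regionInfty F ϖ := by
  have hz' : z ≠ 0 := norm_pos_iff.1 (one_pos.trans hz)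
  refine (mem_regionInfty_iff hϖ.1).2 ⟨fun h => hz' (Option.some.inj h), ?_⟩
  rw [invc.eq_2]
  exact hϖ.2.2 _ (by rw [norm_inv]; exact inv_lt_one_of_one_lt₀ hz)

end Region

section Ge

variable {F : Type*} [NormedField F] {ϖ : F} {k : ℕ}

def lowerGL (c : F) : GL (Fin 2) F :=
  Matrix.GeneralLinearGroup.mkOfDetNeZero !![1, 0; c, 1] (by simp [Matrix.det_fin_two_of])

def upperGL (b : F) : GL (Fin 2) F :=
  Matrix.GeneralLinearGroup.mkOfDetNeZero !![1, b; 0, 1] (by simp [Matrix.det_fin_two_of])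

lemma one_mem_Ge : 1 ∈ Ge F ϖ k := by
  simp [Ge]

lemma lowerGL_mem_Ge {c : F} (hc : ‖c‖ ≤ ‖ϖ‖ ^ (k - 1)) : lowerGL c ∈ Ge F ϖ k := by
  simp [Ge, lowerGL, hc]

lemma upperGL_mem_Ge {b : F} (hb : ‖b‖ ≤ ‖ϖ‖ ^ k) : upperGL b ∈ Ge F ϖ k := by
  simp [Ge, upperGL, hb]

lemma moeb_lowerGL (c z : F) :
    moeb F (lowerGL c : Matrix (Fin 2) (Fin 2) F) (some z) = some (z + c) := by
  simp [lowerGL, moeb, add_comm]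

lemma invc_moeb_upperGL (b : F) {w : Option F} (hw : w ≠ some 0) :
    invc F (moeb F (upperGL b : Matrix (Fin 2) (Fin 2) F) w) = invc F w + b := by
  rw [invc_moeb _ hw] <;> simp [upperGL]

end Ge

section Orbits

variable {F : Type*} [NormedField F] [IsUltrametricDist F] {ϖ : F} {k : ℕ}

lemma orb_Ge_some (hϖ1 : ‖ϖ‖ < 1) (hk : 1 ≤ k) {z₀ : F} (hz₀ : ‖z₀‖ ≤ 1) :
    orb F (Ge F ϖ k) (some z₀) = some '' {z : F | ‖z - z₀‖ ≤ ‖ϖ‖ ^ (k - 1)} := by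
  have hpow : ‖ϖ‖ ^ k ≤ ‖ϖ‖ ^ (k - 1) :=
    pow_le_pow_of_le_one (norm_nonneg ϖ) hϖ1.le (Nat.sub_le k 1)
  ext w
  constructor
  · rintro ⟨g, ⟨ha, hb, hc, hd⟩, rfl⟩
    set A := (g : Matrix (Fin 2) (Fin 2) F)
    have hden : ‖A 0 1 * z₀ + A 1 1‖ = 1 := by
      refine norm_eq_one_of_norm_sub_one_lt ?_
      rw [add_sub_assoc]
      exact (norm_add_le_of_le_of_le (norm_mul_le_of_le_of_norm_le_one hb hz₀) hd).trans_lt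
        (pow_lt_one₀ (norm_nonneg ϖ) hϖ1 (by omega))
    rw [moeb_some_of_ne_zero A (norm_ne_zero_iff.1 (by rw [hden]; exact one_ne_zero))]
    exact ⟨_, norm_div_sub_le_of_norm_denom_eq_one hden
      ((norm_mul_le_of_le_of_norm_le_one ha hz₀).trans hpow)
      ((norm_mul_le_of_le_of_norm_le_one (norm_mul_le_of_le_of_norm_le_one hb hz₀) hz₀).trans hpow)
      hc ((norm_mul_le_of_le_of_norm_le_one hd hz₀).trans hpow), rfl⟩
  · rintro ⟨z, hz, rfl⟩
    exact ⟨lowerGL (z - z₀), lowerGL_mem_Ge hz, by rw [moeb_lowerGL, add_sub_cancel]⟩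

lemma orb_Ge_subset_of_mem_regionInfty (hϖ : ϖ ≠ 0) (hϖ1 : ‖ϖ‖ < 1) (hk : 1 ≤ k) {w₀ : Option F}
    (hw₀ : w₀ ∈ regionInfty F ϖ) :
    orb F (Ge F ϖ k) w₀ ⊆ {w | w ∈ regionInfty F ϖ ∧ ‖invc F w - invc F w₀‖ ≤ ‖ϖ‖ ^ k} := by
  rintro _ ⟨g, ⟨ha, hb, hc, hd⟩, rfl⟩
  obtain ⟨hw₀, hu⟩ := (mem_regionInfty_iff hϖ).1 hw₀
  set u := invc F w₀
  set A := (g : Matrix (Fin 2) (Fin 2) F)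
  have hu1 : ‖u‖ ≤ 1 := hu.trans hϖ1.le
  have hcu : ‖A 1 0 * u‖ ≤ ‖ϖ‖ ^ k := by
    rw [norm_mul, ← pow_sub_one_mul (by omega : k ≠ 0)]
    exact mul_le_mul hc hu (norm_nonneg u) (by positivity)
  have hden : ‖A 1 0 * u + A 0 0‖ = 1 := by
    refine norm_eq_one_of_norm_sub_one_lt ?_
    rw [add_sub_assoc]
    exact (norm_add_le_of_le_of_le hcu ha).trans_lt (pow_lt_one₀ (norm_nonneg ϖ) hϖ1 (by omega))
  have hne : A 1 0 * u + A 0 0 ≠ 0 := norm_ne_zero_iff.1 (by rw [hden]; exact one_ne_zero)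
  have hmove : ‖invc F (moeb F A w₀) - u‖ ≤ ‖ϖ‖ ^ k := by
    rw [invc_moeb A hw₀ hne]
    exact norm_div_sub_le_of_norm_denom_eq_one hden (norm_mul_le_of_le_of_norm_le_one hd hu1)
      (norm_mul_le_of_le_of_norm_le_one hcu hu1) hb (norm_mul_le_of_le_of_norm_le_one ha hu1)
  refine ⟨(mem_regionInfty_iff hϖ).2 ⟨moeb_ne_some_zero A hw₀ hne, ?_⟩, hmove⟩
  rw [← sub_add_cancel (invc F (moeb F A w₀)) u]
  exact norm_add_le_of_le_of_le
    (hmove.trans (pow_le_of_le_one (norm_nonneg ϖ) hϖ1.le (by omega))) hu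

lemma orb_Ge_of_mem_regionInfty (hϖ : ϖ ≠ 0) (hϖ1 : ‖ϖ‖ < 1) (hk : 1 ≤ k) {w₀ : Option F}
    (hw₀ : w₀ ∈ regionInfty F ϖ) :
    orb F (Ge F ϖ k) w₀ = {w | w ∈ regionInfty F ϖ ∧ ‖invc F w - invc F w₀‖ ≤ ‖ϖ‖ ^ k} := by
  refine (orb_Ge_subset_of_mem_regionInfty hϖ hϖ1 hk hw₀).antisymm ?_
  rintro w ⟨hw, hdist⟩
  have hg := upperGL_mem_Ge hdist
  have hmem := orb_Ge_subset_of_mem_regionInfty hϖ hϖ1 hk hw₀ ⟨_, hg, rfl⟩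
  refine ⟨_, hg, invc_injOn_regionInfty hϖ hmem.1 hw ?_⟩
  rw [invc_moeb_upperGL _ ((mem_regionInfty_iff hϖ).1 hw₀).1, add_sub_cancel]

end Orbits

section Digits

variable {F : Type*} [NormedField F] {ϖ : F} {s : Finset F}

def digitSum (ϖ : F) {s : Finset F} {n : ℕ} (f : Fin n → s) : F :=
  ∑ i, (f i : F) * ϖ ^ (i : ℕ)

lemma digitSum_cons {n : ℕ} (a : s) (f : Fin n → s) :
    digitSum ϖ (Fin.cons a f : Fin (n + 1) → s) = a + ϖ * digitSum ϖ f := by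
  simp only [digitSum, Fin.sum_univ_succ, Fin.cons_zero, Fin.cons_succ, Fin.val_zero, pow_zero,
    mul_one, Fin.val_succ, pow_succ', Finset.mul_sum, mul_left_comm]

lemma norm_digitSum_le_one [IsUltrametricDist F] (hϖ1 : ‖ϖ‖ ≤ 1) (hs1 : ∀ x ∈ s, ‖x‖ ≤ 1)
    {n : ℕ} (f : Fin n → s) : ‖digitSum ϖ f‖ ≤ 1 := by
  refine norm_sum_le_of_forall_le_of_nonneg zero_le_one fun i _ => ?_
  rw [norm_mul, norm_pow]
  exact mul_le_one₀ (hs1 _ (f i).2) (by positivity) (pow_le_one₀ (norm_nonneg ϖ) hϖ1)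

lemma exists_norm_sub_digitSum_le (hϖ : ϖ ≠ 0)
    (hcover : ∀ x : F, ‖x‖ ≤ 1 → ∃ y ∈ s, ‖x - y‖ ≤ ‖ϖ‖)
    (n : ℕ) {x : F} (hx : ‖x‖ ≤ 1) : ∃ f : Fin n → s, ‖x - digitSum ϖ f‖ ≤ ‖ϖ‖ ^ n := by
  induction n generalizing x with
  | zero => exact ⟨Fin.elim0, by simpa [digitSum] using hx⟩
  | succ n ih =>
    obtain ⟨y, hy, hxy⟩ := hcover x hx
    have hϖ' : 0 < ‖ϖ‖ := norm_pos_iff.2 hϖ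
    obtain ⟨f, hf⟩ := ih (x := (x - y) / ϖ) (by rwa [norm_div, div_le_one hϖ'])
    refine ⟨Fin.cons ⟨y, hy⟩ f, ?_⟩
    have : x - digitSum ϖ (Fin.cons ⟨y, hy⟩ f : Fin (n + 1) → s)
        = ϖ * ((x - y) / ϖ - digitSum ϖ f) := by
      rw [digitSum_cons, mul_sub, mul_div_cancel₀ _ hϖ]
      ring
    rw [this, norm_mul, pow_succ']
    exact mul_le_mul_of_nonneg_left hf hϖ'.le

lemma eq_of_norm_digitSum_sub_le [IsUltrametricDist F] (hϖ : ϖ ≠ 0) (hϖ1 : ‖ϖ‖ ≤ 1)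
    (hs1 : ∀ x ∈ s, ‖x‖ ≤ 1) (hsep : ∀ x ∈ s, ∀ y ∈ s, ‖x - y‖ ≤ ‖ϖ‖ → x = y) {n : ℕ}
    {f g : Fin n → s} (h : ‖digitSum ϖ f - digitSum ϖ g‖ ≤ ‖ϖ‖ ^ n) : f = g := by
  induction n with
  | zero => exact Subsingleton.elim f g
  | succ n ih =>
    obtain ⟨a, f, rfl⟩ : ∃ a f', f = Fin.cons a f' := ⟨f 0, Fin.tail f, (Fin.cons_self_tail f).symm⟩
    obtain ⟨b, g, rfl⟩ : ∃ b g', g = Fin.cons b g' := ⟨g 0, Fin.tail g, (Fin.cons_self_tail g).symm⟩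
    rw [digitSum_cons, digitSum_cons] at h
    have hϖ' : 0 < ‖ϖ‖ := norm_pos_iff.2 hϖ
    have htail : ‖ϖ * (digitSum ϖ f - digitSum ϖ g)‖ ≤ ‖ϖ‖ := by
      rw [norm_mul]
      exact mul_le_of_le_one_right hϖ'.le (norm_sub_le_of_le_of_le
        (norm_digitSum_le_one hϖ1 hs1 _) (norm_digitSum_le_one hϖ1 hs1 _))
    have hhead : a = b := by
      refine Subtype.ext (hsep _ a.2 _ b.2 ?_)
      have : (a : F) - b = (a + ϖ * digitSum ϖ f) - (b + ϖ * digitSum ϖ g)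
          - ϖ * (digitSum ϖ f - digitSum ϖ g) := by
        ring
      rw [this]
      exact norm_sub_le_of_le_of_le (h.trans (pow_le_of_le_one hϖ'.le hϖ1 n.succ_ne_zero)) htail
    rw [hhead, add_sub_add_left_eq_sub, ← mul_sub, norm_mul, pow_succ'] at h
    rw [hhead, ih (le_of_mul_le_mul_left h hϖ')]

end Digits

section Count

variable {F : Type*} [NormedField F] [IsUltrametricDist F] {ϖ : F} {k : ℕ} {s : Finset F}

def orbitRep (ϖ : F) {s : Finset F} {n : ℕ} : Bool × (Fin n → s) → Option F
  | (false, f) => some (digitSum ϖ f)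
  | (true, f) => ofInvc (ϖ * digitSum ϖ f)

lemma orb_orbitRep_injective (hϖ : ϖ ≠ 0) (hϖ1 : ‖ϖ‖ < 1) (hk : 1 ≤ k)
    (hs1 : ∀ x ∈ s, ‖x‖ ≤ 1) (hsep : ∀ x ∈ s, ∀ y ∈ s, ‖x - y‖ ≤ ‖ϖ‖ → x = y) :
    Function.Injective fun p : Bool × (Fin (k - 1) → s) => orb F (Ge F ϖ k) (orbitRep ϖ p) := by
  have hV (f : Fin (k - 1) → s) : ‖digitSum ϖ f‖ ≤ 1 := norm_digitSum_le_one hϖ1.le hs1 f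
  have hreg (f : Fin (k - 1) → s) : ofInvc (ϖ * digitSum ϖ f) ∈ regionInfty F ϖ :=
    ofInvc_mul_mem_regionInfty hϖ (hV f)
  have hdisc_ne_region (f f' : Fin (k - 1) → s) :
      orb F (Ge F ϖ k) (orbitRep ϖ (false, f)) ≠ orb F (Ge F ϖ k) (orbitRep ϖ (true, f')) := by
    intro h
    have hmem := h ▸ mem_orb_self one_mem_Ge (orbitRep ϖ (false, f))
    have := (orb_Ge_subset_of_mem_regionInfty hϖ hϖ1 hk (hreg f') hmem).1
    exact (hV f).not_gt (one_lt_norm_of_some_mem_regionInfty hϖ hϖ1 this)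
  rintro ⟨_ | _, f⟩ ⟨_ | _, f'⟩ h <;> dsimp only at h
  · have hmem := h ▸ mem_orb_self one_mem_Ge (orbitRep ϖ (false, f))
    simp only [orbitRep] at hmem
    rw [orb_Ge_some hϖ1 hk (hV f')] at hmem
    obtain ⟨z, hz, hzf⟩ := hmem
    rw [Option.some.inj hzf] at hz
    rw [eq_of_norm_digitSum_sub_le hϖ hϖ1.le hs1 hsep hz]
  · exact absurd h (hdisc_ne_region f f')
  · exact absurd h.symm (hdisc_ne_region f' f)
  · have hmem := h ▸ mem_orb_self one_mem_Ge (orbitRep ϖ (true, f))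
    have hclose := (orb_Ge_subset_of_mem_regionInfty hϖ hϖ1 hk (hreg f') hmem).2
    simp only [orbitRep] at hclose
    rw [invc_ofInvc, invc_ofInvc, ← mul_sub, norm_mul,
      ← mul_pow_sub_one (by omega : k ≠ 0)] at hclose
    rw [eq_of_norm_digitSum_sub_le hϖ hϖ1.le hs1 hsep
      (le_of_mul_le_mul_left hclose (norm_pos_iff.2 hϖ))]

lemma exists_orb_orbitRep_eq (hϖ : IsUniformizer F ϖ) (hk : 1 ≤ k)
    (hs1 : ∀ x ∈ s, ‖x‖ ≤ 1) (hcover : ∀ x : F, ‖x‖ ≤ 1 → ∃ y ∈ s, ‖x - y‖ ≤ ‖ϖ‖)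
    (w : Option F) :
    ∃ p : Bool × (Fin (k - 1) → s), orb F (Ge F ϖ k) (orbitRep ϖ p) = orb F (Ge F ϖ k) w := by
  have hϖ0 := hϖ.1
  have hϖ1 := hϖ.2.1
  by_cases hdisc : ∃ z, w = some z ∧ ‖z‖ ≤ 1
  · obtain ⟨z, rfl, hz⟩ := hdisc
    obtain ⟨f, hf⟩ := exists_norm_sub_digitSum_le hϖ0 hcover (k - 1) hz
    refine ⟨(false, f), ?_⟩
    rw [orbitRep, orb_Ge_some hϖ1 hk (norm_digitSum_le_one hϖ1.le hs1 f), orb_Ge_some hϖ1 hk hz]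
    rw [norm_sub_rev] at hf
    exact congrArg _ (Set.ext fun x => norm_sub_le_iff_of_norm_sub_le hf)
  · have hw : w ∈ regionInfty F ϖ := by
      rcases w with _ | z
      · exact Or.inl rfl
      · exact hϖ.some_mem_regionInfty_of_one_lt_norm (not_le.1 fun hz => hdisc ⟨z, rfl, hz⟩)
    have hϖ' : 0 < ‖ϖ‖ := norm_pos_iff.2 hϖ0
    obtain ⟨f, hf⟩ := exists_norm_sub_digitSum_le hϖ0 hcover (k - 1) (x := invc F w / ϖ)
      (by rw [norm_div, div_le_one hϖ']; exact ((mem_regionInfty_iff hϖ0).1 hw).2)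
    have hclose : ‖ϖ * digitSum ϖ f - invc F w‖ ≤ ‖ϖ‖ ^ k := by
      rw [← mul_div_cancel₀ (invc F w) hϖ0, ← mul_sub, norm_mul, norm_sub_rev,
        ← mul_pow_sub_one (by omega : k ≠ 0)]
      exact mul_le_mul_of_nonneg_left hf hϖ'.le
    refine ⟨(true, f), ?_⟩
    rw [orbitRep, orb_Ge_of_mem_regionInfty hϖ0 hϖ1 hk
      (ofInvc_mul_mem_regionInfty hϖ0 (norm_digitSum_le_one hϖ1.le hs1 f)),
      orb_Ge_of_mem_regionInfty hϖ0 hϖ1 hk hw, invc_ofInvc]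
    exact Set.ext fun x => and_congr_right fun _ => norm_sub_le_iff_of_norm_sub_le hclose

lemma card_orbits_Ge (hϖ : IsUniformizer F ϖ) {q : ℕ} (hq : ResidueCard F ϖ q) (hk : 1 ≤ k) :
    Nat.card {D : Set (Option F) // IsOrbit F (Ge F ϖ k) D} = 2 * q ^ (k - 1) := by
  obtain ⟨s, rfl, hs1, hs⟩ := hq
  have hsep : ∀ x ∈ s, ∀ y ∈ s, ‖x - y‖ ≤ ‖ϖ‖ → x = y := fun x hx y hy hxy =>
    (hs x (hs1 x hx)).unique ⟨hx, by simp⟩ ⟨hy, hxy⟩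
  let e (p : Bool × (Fin (k - 1) → s)) : {D : Set (Option F) // IsOrbit F (Ge F ϖ k) D} :=
    ⟨orb F (Ge F ϖ k) (orbitRep ϖ p), _, rfl⟩
  have he : Function.Bijective e := by
    refine ⟨fun p p' h =>
      orb_orbitRep_injective hϖ.1 hϖ.2.1 hk hs1 hsep (congrArg Subtype.val h), ?_⟩
    rintro ⟨D, w, rfl⟩
    obtain ⟨p, hp⟩ := exists_orb_orbitRep_eq hϖ hk hs1 (fun x hx => (hs x hx).exists) w
    exact ⟨p, Subtype.ext hp⟩
  rw [← Nat.card_eq_of_bijective e he]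
  simp

end Count

theorem statement11_general (F : Type*) [NontriviallyNormedField F] [IsUltrametricDist F]
    (ϖ : F) (hϖ : IsUniformizer F ϖ) (q : ℕ) (hq : ResidueCard F ϖ q)
    (k : ℕ) (hk : 1 ≤ k) :
    Nat.card {D : Set (Option F) // IsOrbit F (Ge F ϖ k) D} = 2 * q ^ (k - 1) ∧
    (∀ z₀ : F, ‖z₀‖ ≤ 1 →
      orb F (Ge F ϖ k) (Option.some z₀) =
        Option.some '' {z : F | ‖z - z₀‖ ≤ ‖ϖ‖ ^ (k - 1)}) ∧
    (∀ w₀ ∈ regionInfty F ϖ,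
      orb F (Ge F ϖ k) w₀ =
        {w | w ∈ regionInfty F ϖ ∧ ‖invc F w - invc F w₀‖ ≤ ‖ϖ‖ ^ k}) :=
  ⟨card_orbits_Ge hϖ hq hk, fun _ hz₀ => orb_Ge_some hϖ.2.1 hk hz₀,
    fun _ hw₀ => orb_Ge_of_mem_regionInfty hϖ.1 hϖ.2.1 hk hw₀⟩

theorem statement11 (p : ℕ) [Fact p.Prime] (F : Type*) [NontriviallyNormedField F]
    [IsUltrametricDist F] [NormedAlgebra ℚ_[p] F] [FiniteDimensional ℚ_[p] F]
    (ϖ : F) (hϖ : IsUniformizer F ϖ) (q : ℕ) (hq : ResidueCard F ϖ q)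
    (k : ℕ) (hk : 1 ≤ k) :
    Nat.card {D : Set (Option F) // IsOrbit F (Ge F ϖ k) D} = 2 * q ^ (k - 1) ∧
    (∀ z₀ : F, ‖z₀‖ ≤ 1 →
      orb F (Ge F ϖ k) (Option.some z₀) =
        Option.some '' {z : F | ‖z - z₀‖ ≤ ‖ϖ‖ ^ (k - 1)}) ∧
    (∀ w₀ ∈ regionInfty F ϖ,
      orb F (Ge F ϖ k) w₀ =
        {w | w ∈ regionInfty F ϖ ∧ ‖invc F w - invc F w₀‖ ≤ ‖ϖ‖ ^ k}) :=
  statement11_general F ϖ hϖ q hq k hk
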